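/- Under the standing assumptions, suppose k > max over all pairs i, j ∈ {1,…,n} of max( (w_i* + v_j* − γ_{i,j})/λ* + (n − 1), (w_i* − α_i + v_j* − β_j)/λ* + 2(n − 1) ), where terms involving γ_{i,j} = −∞ are omitted from the maximum. Then Γ(k) is rank one; more precisely, Γ(k) equals the max-plus outer product of its first column and its first row: Γ(k)_{i,j} = Γ(k)_{i,1} + Γ(k)_{1,j} for all i, j ∈ {1,…,n}. -/

import Mathlib

/-
Common framework for "A bound for the rank-one transient of inhomogeneous matrix
products in special case" (Kennedy-Cochran-Patrick, Sergeev, Berežný).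

We work over the max-plus semiring, modelled inside `EReal` (so `⊥ = -∞` is the
max-plus zero and ordinary addition is the max-plus multiplication).  Matrices are
functions `Fin m → Fin m → EReal`.  The distinguished node "1" of the paper is the
node `0 : Fin (n+2)` (so that `n + 2 ≥ 2` plays the role of the paper's `n ≥ 2`).

A walk is a nonempty list of nodes.  Walks on the trellis digraph of the product
`A 1 ⊗ ⋯ ⊗ A k` additionally record the level at which they start: the arc from the
`(l-1)`-st to the `l`-th node of a walk starting at level `s` has weight given by the
matrix `A (s + l)`.
-/

open scoped Classical

noncomputable section

namespace MaxPlusTransient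

variable {m : ℕ}

/-- Weight of a walk on the trellis digraph, starting at level `s`. -/
def tw (M : ℕ → Fin m → Fin m → EReal) : ℕ → List (Fin m) → EReal
  | _, [] => 0
  | _, [_] => 0
  | s, a :: b :: t => M (s + 1) a b + tw M (s + 1) (b :: t)

/-- Being a walk on the trellis digraph, starting at level `s` (all traversed arcs exist,
i.e. have weight `≠ -∞`); a walk is a nonempty list of nodes. -/
def twalk (M : ℕ → Fin m → Fin m → EReal) : ℕ → List (Fin m) → Prop
  | _, [] => False
  | _, [_] => True
  | s, a :: b :: t => M (s + 1) a b ≠ ⊥ ∧ twalk M (s + 1) (b :: t)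

/-- Weight of a walk on the digraph `D_A` of a single matrix `A`. -/
def wWeight (A : Fin m → Fin m → EReal) (W : List (Fin m)) : EReal :=
  tw (fun _ => A) 0 W

/-- Being a walk on the digraph `D_A` of a matrix `A`. -/
def isWalk (A : Fin m → Fin m → EReal) (W : List (Fin m)) : Prop :=
  twalk (fun _ => A) 0 W

/-- A path is a walk with no repeated nodes. -/
def isPath (A : Fin m → Fin m → EReal) (W : List (Fin m)) : Prop :=
  isWalk A W ∧ W.Nodup

/-- A cycle is a walk of length (number of arcs) at least one whose first and last
nodes coincide. -/
def isCycle (A : Fin m → Fin m → EReal) (W : List (Fin m)) : Prop :=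
  isWalk A W ∧ 2 ≤ W.length ∧ W.head? = W.getLast?

/-- A matrix is irreducible iff its digraph is strongly connected. -/
def irreducible (A : Fin m → Fin m → EReal) : Prop :=
  ∀ i j : Fin m, ∃ W, isWalk A W ∧ W.head? = some i ∧ W.getLast? = some j

/-- Geometric equivalence: the digraphs have the same arcs. -/
def geomEq (A B : Fin m → Fin m → EReal) : Prop :=
  ∀ i j, A i j = ⊥ ↔ B i j = ⊥

/-- Max-plus matrix product. -/
def mp (A B : Fin m → Fin m → EReal) : Fin m → Fin m → EReal :=
  fun i j => ⨆ s, A i s + B s j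

/-- `Gamma M k = M 1 ⊗ M 2 ⊗ ⋯ ⊗ M k` (max-plus product), with `Gamma M 0` the
max-plus identity matrix. -/
def Gamma (M : ℕ → Fin m → Fin m → EReal) : ℕ → Fin m → Fin m → EReal
  | 0 => fun i j => if i = j then 0 else ⊥
  | k + 1 => mp (Gamma M k) (M (k + 1))

/-- An initial walk from `i` to `one` on the trellis digraph of `M 1 ⊗ ⋯ ⊗ M k`:
it starts at node `i` at level `0`, ends at node `one` at some level `≤ k`, and the
only node of the walk equal to `one` is its final node. -/
def isInitialWalk (M : ℕ → Fin m → Fin m → EReal) (one : Fin m) (k : ℕ) (i : Fin m)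
    (W : List (Fin m)) : Prop :=
  twalk M 0 W ∧ W.length - 1 ≤ k ∧ W.head? = some i ∧ W.getLast? = some one ∧
    ∀ v ∈ W.dropLast, v ≠ one

/-- A final walk from `one` to `j` on the trellis digraph of `M 1 ⊗ ⋯ ⊗ M k`:
it starts at node `one` at some level `s`, ends at node `j` at level `k`, and the
only node of the walk equal to `one` is its first node. -/
def isFinalWalk (M : ℕ → Fin m → Fin m → EReal) (one : Fin m) (k : ℕ) (j : Fin m) (s : ℕ)
    (W : List (Fin m)) : Prop :=
  twalk M s W ∧ s + (W.length - 1) = k ∧ W.head? = some one ∧ W.getLast? = some j ∧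
    ∀ v ∈ W.tail, v ≠ one

/-- A full walk from `i` to `j` on the trellis digraph of `M 1 ⊗ ⋯ ⊗ M k`: it goes
from node `i` at level `0` to node `j` at level `k`. -/
def isFullWalk (M : ℕ → Fin m → Fin m → EReal) (k : ℕ) (i j : Fin m)
    (W : List (Fin m)) : Prop :=
  twalk M 0 W ∧ W.length = k + 1 ∧ W.head? = some i ∧ W.getLast? = some j

/-- `w_i*`: maximal weight of an initial walk from `i` to `one`. -/
def wStar (M : ℕ → Fin m → Fin m → EReal) (one : Fin m) (k : ℕ) (i : Fin m) : EReal :=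
  sSup {x : EReal | ∃ W, isInitialWalk M one k i W ∧ x = tw M 0 W}

/-- `v_j*`: maximal weight of a final walk from `one` to `j`. -/
def vStar (M : ℕ → Fin m → Fin m → EReal) (one : Fin m) (k : ℕ) (j : Fin m) : EReal :=
  sSup {x : EReal | ∃ s W, isFinalWalk M one k j s W ∧ x = tw M s W}

/-- `α_i`: maximal weight of a path on `D_A` from `i` to `one`. -/
def alphaE (A : Fin m → Fin m → EReal) (one : Fin m) (i : Fin m) : EReal :=
  sSup {x : EReal | ∃ W, isPath A W ∧ W.head? = some i ∧ W.getLast? = some one ∧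
    x = wWeight A W}

/-- `β_j`: maximal weight of a path on `D_A` from `one` to `j`. -/
def betaE (A : Fin m → Fin m → EReal) (one : Fin m) (j : Fin m) : EReal :=
  sSup {x : EReal | ∃ W, isPath A W ∧ W.head? = some one ∧ W.getLast? = some j ∧
    x = wWeight A W}

/-- `γ_{i,j}`: maximal weight of a path on `D_A` from `i` to `j` not passing through
`one` (`-∞` if no such path exists). -/
def gammaE (A : Fin m → Fin m → EReal) (one : Fin m) (i j : Fin m) : EReal :=
  sSup {x : EReal | ∃ W, isPath A W ∧ W.head? = some i ∧ W.getLast? = some j ∧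
    (∀ v ∈ W, v ≠ one) ∧ x = wWeight A W}

/-- The set of mean weights of cycles of `D_A` avoiding the node `one`. -/
def lamSet (A : Fin m → Fin m → EReal) (one : Fin m) : Set ℝ :=
  {x : ℝ | ∃ W, isCycle A W ∧ (∀ v ∈ W, v ≠ one) ∧
    ∃ r : ℝ, wWeight A W = (r : EReal) ∧ x = r / ((W.length : ℝ) - 1)}

/-- `λ*`: the supremum of the mean weights of cycles of `D_A` avoiding `one`. -/
def lamStar (A : Fin m → Fin m → EReal) (one : Fin m) : ℝ :=
  sSup (lamSet A one)

/-- `w_i`: maximal weight of a walk of length at most `k` from `i` to `one` on `D_A`. -/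
def wInf (A : Fin m → Fin m → EReal) (one : Fin m) (k : ℕ) (i : Fin m) : EReal :=
  sSup {x : EReal | ∃ W, isWalk A W ∧ W.length - 1 ≤ k ∧ W.head? = some i ∧
    W.getLast? = some one ∧ x = wWeight A W}

/-- `v_j`: maximal weight of a walk of length at most `k` from `one` to `j` on `D_A`. -/
def vInf (A : Fin m → Fin m → EReal) (one : Fin m) (k : ℕ) (j : Fin m) : EReal :=
  sSup {x : EReal | ∃ W, isWalk A W ∧ W.length - 1 ≤ k ∧ W.head? = some one ∧
    W.getLast? = some j ∧ x = wWeight A W}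

/-- The standing assumptions of the paper on the set `𝒳` and its entrywise boundaries
`Asup` (supremum) and `Ainf` (infimum):
matrices of `𝒳` have no `+∞` entries, `Asup`/`Ainf` are the entrywise sup/inf,
`Asup` has no `+∞` entries and `Ainf` has no `-∞` entries where matrices of `𝒳` are
finite; all matrices of `𝒳` and also `Ainf` are irreducible and pairwise geometrically
equivalent; every matrix of `𝒳` and also `Asup` has `(one, one)` entry `0` and all its
cycles other than (repetitions of) the loop at `one` have strictly negative (mean)
weight. -/
def Standing (𝒳 : Set (Fin m → Fin m → EReal)) (Asup Ainf : Fin m → Fin m → EReal)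
    (one : Fin m) : Prop :=
  𝒳.Nonempty ∧
  (∀ X ∈ 𝒳, ∀ i j, X i j ≠ ⊤) ∧
  (∀ i j, Asup i j = ⨆ X ∈ 𝒳, X i j) ∧
  (∀ i j, Ainf i j = ⨅ X ∈ 𝒳, X i j) ∧
  (∀ i j, Asup i j ≠ ⊤) ∧
  (∀ X ∈ 𝒳, ∀ i j, X i j ≠ ⊥ → Ainf i j ≠ ⊥) ∧
  (∀ X ∈ 𝒳, irreducible X) ∧
  irreducible Ainf ∧
  (∀ X ∈ 𝒳, geomEq X Ainf) ∧
  (∀ X ∈ 𝒳, X one one = 0) ∧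
  (∀ X ∈ 𝒳, ∀ W, isCycle X W → (∃ v ∈ W, v ≠ one) → wWeight X W < 0) ∧
  Asup one one = 0 ∧
  (∀ W, isCycle Asup W → (∃ v ∈ W, v ≠ one) → wWeight Asup W < 0)

-- basic lemmas
theorem tw_cons_cons (M : ℕ → Fin m → Fin m → EReal) (s : ℕ) (a b : Fin m) (t : List (Fin m)) :
    tw M s (a :: b :: t) = M (s + 1) a b + tw M (s + 1) (b :: t) := rfl

theorem twalk_cons_cons (M : ℕ → Fin m → Fin m → EReal) (s : ℕ) (a b : Fin m) (t : List (Fin m)) :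
    twalk M s (a :: b :: t) ↔ M (s + 1) a b ≠ ⊥ ∧ twalk M (s + 1) (b :: t) := Iff.rfl

theorem tw_single (M : ℕ → Fin m → Fin m → EReal) (s : ℕ) (a : Fin m) : tw M s [a] = 0 := rfl

theorem twalk_ne_nil {M : ℕ → Fin m → Fin m → EReal} {s : ℕ} {W : List (Fin m)}
    (h : twalk M s W) : W ≠ [] := by cases W with | nil => exact absurd h (by simp [twalk]) | cons a t => simp

theorem tw_splice (M : ℕ → Fin m → Fin m → EReal) :
    ∀ (W1 : List (Fin m)) (s : ℕ) (W2 : List (Fin m)), W1 ≠ [] → W1.getLast? = W2.head? →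
    tw M s (W1 ++ W2.tail) = tw M s W1 + tw M (s + (W1.length - 1)) W2
  | [], _, _, h, _ => absurd rfl h
  | [a], s, W2, _, hj => by
      cases W2 with
      | nil => simp at hj
      | cons b t =>
        simp only [List.getLast?_singleton, List.head?_cons, Option.some_inj] at hj
        subst hj
        simp [tw_single, List.singleton_append, List.tail_cons]
  | a :: b :: t, s, W2, _, hj => by
      have hj' : (b :: t).getLast? = W2.head? := by
        rwa [List.getLast?_cons_cons] at hj
      have IH := tw_splice M (b :: t) (s + 1) W2 (by simp) hj'
      show tw M s (a :: b :: (t ++ W2.tail)) = _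
      rw [tw_cons_cons, tw_cons_cons]
      have : (b :: t) ++ W2.tail = b :: (t ++ W2.tail) := rfl
      have hidx : s + 1 + ((b :: t : List (Fin m)).length - 1)
          = s + ((a :: b :: t : List (Fin m)).length - 1) := by
        simp only [List.length_cons]; omega
      rw [← this, IH, hidx]
      exact (add_assoc _ _ _).symm

theorem twalk_splice (M : ℕ → Fin m → Fin m → EReal) :
    ∀ (W1 : List (Fin m)) (s : ℕ) (W2 : List (Fin m)), W1 ≠ [] → W1.getLast? = W2.head? →
    (twalk M s (W1 ++ W2.tail) ↔ twalk M s W1 ∧ twalk M (s + (W1.length - 1)) W2)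
  | [], _, _, h, _ => absurd rfl h
  | [a], s, W2, _, hj => by
      cases W2 with
      | nil => simp at hj
      | cons b t =>
        simp only [List.getLast?_singleton, List.head?_cons, Option.some_inj] at hj
        subst hj
        simp [List.singleton_append, List.tail_cons, twalk]
  | a :: b :: t, s, W2, _, hj => by
      have hj' : (b :: t).getLast? = W2.head? := by
        rwa [List.getLast?_cons_cons] at hj
      have IH := twalk_splice M (b :: t) (s + 1) W2 (by simp) hj'
      show twalk M s (a :: b :: (t ++ W2.tail)) ↔ _
      rw [twalk_cons_cons]
      have : (b :: t) ++ W2.tail = b :: (t ++ W2.tail) := rfl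
      have hidx : s + 1 + ((b :: t : List (Fin m)).length - 1)
          = s + ((a :: b :: t : List (Fin m)).length - 1) := by
        simp only [List.length_cons]; omega
      rw [← this, IH, twalk_cons_cons, hidx, and_assoc]

-- chunk 2 (appended after chunk1 content when assembling)
theorem ereal_exists_real (e : EReal) (h1 : e ≠ ⊥) (h2 : e ≠ ⊤) : ∃ r : ℝ, e = (r : EReal) := by
  induction e with
  | bot => simp at h1
  | coe r => exact ⟨r, rfl⟩
  | top => simp at h2

theorem tw_le_tw (M N : ℕ → Fin m → Fin m → EReal) :
    ∀ (W : List (Fin m)) (s s' : ℕ),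
    (∀ d (a b : Fin m), d + 2 ≤ W.length → M (s + d + 1) a b ≤ N (s' + d + 1) a b) →
    tw M s W ≤ tw N s' W
  | [], _, _, _ => le_refl _
  | [a], _, _, _ => le_refl _
  | a :: b :: t, s, s', h => by
      rw [tw_cons_cons, tw_cons_cons]
      refine add_le_add ?_ (tw_le_tw M N (b :: t) (s + 1) (s' + 1) ?_)
      · have := h 0 a b (by simp [List.length_cons])
        simpa using this
      · intro d a' b' hd
        have := h (d + 1) a' b' (by simp only [List.length_cons] at hd ⊢; omega)
        convert this using 3 <;> omega

theorem twalk_mono (M N : ℕ → Fin m → Fin m → EReal) :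
    ∀ (W : List (Fin m)) (s s' : ℕ),
    (∀ d (a b : Fin m), d + 2 ≤ W.length → M (s + d + 1) a b ≤ N (s' + d + 1) a b) →
    twalk M s W → twalk N s' W
  | [], _, _, _, hw => hw
  | [a], _, _, _, _ => trivial
  | a :: b :: t, s, s', h, hw => by
      rw [twalk_cons_cons] at hw ⊢
      refine ⟨?_, twalk_mono M N (b :: t) (s + 1) (s' + 1) ?_ hw.2⟩
      · have h1 := h 0 a b (by simp [List.length_cons])
        simp only [Nat.add_zero] at h1
        intro hbot
        rw [hbot] at h1
        exact hw.1 (le_bot_iff.mp h1)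
      · intro d a' b' hd
        have := h (d + 1) a' b' (by simp only [List.length_cons] at hd ⊢; omega)
        convert this using 3 <;> omega

theorem tw_shift (M : Fin m → Fin m → EReal) (W : List (Fin m)) (s : ℕ) :
    tw (fun _ => M) s W = wWeight M W :=
  le_antisymm (tw_le_tw _ _ W s 0 (fun _ _ _ _ => le_refl _))
    (tw_le_tw _ _ W 0 s (fun _ _ _ _ => le_refl _))

theorem twalk_shift {M : Fin m → Fin m → EReal} {W : List (Fin m)} {s s' : ℕ}
    (h : twalk (fun _ => M) s W) : twalk (fun _ => M) s' W :=
  twalk_mono _ _ W s s' (fun _ _ _ _ => le_refl _) h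

theorem tw_real (M : ℕ → Fin m → Fin m → EReal) :
    ∀ (W : List (Fin m)) (s : ℕ), twalk M s W →
    (∀ d (a b : Fin m), d + 2 ≤ W.length → M (s + d + 1) a b ≠ ⊤) →
    ∃ r : ℝ, tw M s W = (r : EReal)
  | [], _, _, _ => ⟨0, by simp [tw]⟩
  | [a], _, _, _ => ⟨0, by simp [tw]⟩
  | a :: b :: t, s, hw, h => by
      rw [twalk_cons_cons] at hw
      obtain ⟨r1, hr1⟩ : ∃ r : ℝ, M (s + 1) a b = (r : EReal) := by
        refine ereal_exists_real _ hw.1 ?_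
        have h1 := h 0 a b (by simp [List.length_cons])
        simpa using h1
      obtain ⟨r2, hr2⟩ := tw_real M (b :: t) (s + 1) hw.2 (by
        intro d a' b' hd
        have := h (d + 1) a' b' (by simp only [List.length_cons] at hd ⊢; omega)
        convert this using 3 <;> omega)
      exact ⟨r1 + r2, by rw [tw_cons_cons, hr1, hr2, ← EReal.coe_add]⟩

theorem tw_bot (M : ℕ → Fin m → Fin m → EReal) :
    ∀ (W : List (Fin m)) (s : ℕ), W ≠ [] → ¬ twalk M s W → tw M s W = ⊥
  | [], _, h, _ => absurd rfl h
  | [a], _, _, hw => absurd trivial hw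
  | a :: b :: t, s, _, hw => by
      rw [twalk_cons_cons, not_and_or] at hw
      rw [tw_cons_cons]
      rcases hw with hw | hw
      · rw [not_not.mp hw, EReal.bot_add]
      · rw [tw_bot M (b :: t) (s + 1) (by simp) hw, EReal.add_bot]
-- chunk 3: list utilities
theorem getLast?_append_cons {α : Type*} (t : List α) (a : α) (u : List α) :
    (t ++ a :: u).getLast? = (a :: u).getLast? := by
  rw [List.getLast?_append]
  cases h : (a :: u).getLast? with
  | none => simp [List.getLast?_eq_none_iff] at h
  | some b => simp

theorem head?_append_cons {α : Type*} (t : List α) (a : α) (u v : List α) :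
    (t ++ a :: u).head? = (t ++ a :: v).head? := by cases t <;> simp

theorem getLast?_cons_ne_nil {α : Type*} (a : α) {t : List α} (h : t ≠ []) :
    (a :: t).getLast? = t.getLast? := by
  cases t with
  | nil => exact absurd rfl h
  | cons b r => exact List.getLast?_cons_cons

theorem first_split {α : Type*} : ∀ {l : List α} {a : α}, a ∈ l →
    ∃ t u, l = t ++ a :: u ∧ ∀ x ∈ t, x ≠ a
  | [], a, h => absurd h (by simp)
  | b :: r, a, h => by
      by_cases hb : b = a
      · exact ⟨[], r, by simp [hb], by simp⟩
      · have : a ∈ r := by rcases List.mem_cons.mp h with h | h; exact absurd h.symm hb; exact h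
        obtain ⟨t, u, rfl, ht⟩ := first_split this
        exact ⟨b :: t, u, rfl, by
          intro x hx
          rcases List.mem_cons.mp hx with rfl | hx
          · exact hb
          · exact ht x hx⟩

theorem split_of_not_nodup {α : Type*} : ∀ {l : List α}, ¬ l.Nodup →
    ∃ (P1 : List α) (x : α) (Q P2 : List α), l = P1 ++ x :: (Q ++ x :: P2)
  | [], h => absurd List.nodup_nil h
  | b :: r, h => by
      by_cases hb : b ∈ r
      · obtain ⟨Q, P2, rfl⟩ := List.append_of_mem hb
        exact ⟨[], b, Q, P2, rfl⟩
      · have : ¬ r.Nodup := by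
          intro hr
          exact h (List.nodup_cons.mpr ⟨hb, hr⟩)
        obtain ⟨P1, x, Q, P2, rfl⟩ := split_of_not_nodup this
        exact ⟨b :: P1, x, Q, P2, rfl⟩

theorem sSup_mem_of_real {S : Set EReal} (hfin : S.Finite) {r : ℝ}
    (h : sSup S = (r : EReal)) : (r : EReal) ∈ S := by
  have hne : S.Nonempty := by
    rcases Set.eq_empty_or_nonempty S with rfl | hne
    · rw [sSup_empty] at h; exact absurd h.symm (EReal.coe_ne_bot r)
    · exact hne
  rw [← h]
  exact Set.Nonempty.csSup_mem hne hfin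
-- chunk 4: surgery
theorem surgery (A : Fin m → Fin m → EReal) (P1 : List (Fin m)) (x : Fin m)
    (Q P2 : List (Fin m)) :
    wWeight A (P1 ++ x :: (Q ++ x :: P2))
      = wWeight A (P1 ++ x :: P2) + wWeight A (x :: (Q ++ [x])) ∧
    (isWalk A (P1 ++ x :: (Q ++ x :: P2)) →
      isWalk A (P1 ++ x :: P2) ∧ isWalk A (x :: (Q ++ [x]))) ∧
    (P1 ++ x :: P2).head? = (P1 ++ x :: (Q ++ x :: P2)).head? ∧
    (P1 ++ x :: P2).getLast? = (P1 ++ x :: (Q ++ x :: P2)).getLast? ∧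
    (P1 ++ x :: P2).length + (x :: (Q ++ [x])).length
      = (P1 ++ x :: (Q ++ x :: P2)).length + 1 := by
  have e1 : (P1 ++ [x]) ++ (x :: (Q ++ x :: P2)).tail = P1 ++ x :: (Q ++ x :: P2) := by
    simp
  have e2 : (x :: (Q ++ [x])) ++ (x :: P2).tail = x :: (Q ++ x :: P2) := by
    simp
  have e3 : (P1 ++ [x]) ++ (x :: P2).tail = P1 ++ x :: P2 := by
    simp
  have hne1 : (P1 ++ [x]) ≠ [] := by simp
  have hne2 : (x :: (Q ++ [x])) ≠ ([] : List (Fin m)) := by simp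
  have hj1 : (P1 ++ [x]).getLast? = (x :: (Q ++ x :: P2)).head? := by
    rw [List.getLast?_concat]; rfl
  have hj2 : (x :: (Q ++ [x])).getLast? = (x :: P2).head? := by
    have : x :: (Q ++ [x]) = (x :: Q) ++ [x] := by simp
    rw [this, List.getLast?_concat]; rfl
  have hj3 : (P1 ++ [x]).getLast? = (x :: P2).head? := by
    rw [List.getLast?_concat]; rfl
  have s1 := tw_splice (fun _ => A) (P1 ++ [x]) 0 (x :: (Q ++ x :: P2)) hne1 hj1
  have s2 := tw_splice (fun _ => A) (x :: (Q ++ [x])) (0 + ((P1 ++ [x]).length - 1))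
    (x :: P2) hne2 hj2
  have s3 := tw_splice (fun _ => A) (P1 ++ [x]) 0 (x :: P2) hne1 hj3
  rw [e1] at s1; rw [e2] at s2; rw [e3] at s3
  refine ⟨?_, ?_, ?_, ?_, ?_⟩
  · show tw (fun _ => A) 0 _ = tw (fun _ => A) 0 _ + tw (fun _ => A) 0 _
    rw [s1, s3, s2, tw_shift, tw_shift, tw_shift, tw_shift, tw_shift]
    rw [add_assoc]
    exact congrArg (wWeight A (P1 ++ [x]) + ·) (add_comm _ _)
  · intro hW
    have w1 := (twalk_splice (fun _ => A) (P1 ++ [x]) 0 (x :: (Q ++ x :: P2)) hne1 hj1)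
    rw [e1] at w1
    obtain ⟨wa, wb⟩ := w1.mp hW
    have w2 := (twalk_splice (fun _ => A) (x :: (Q ++ [x])) (0 + ((P1 ++ [x]).length - 1))
      (x :: P2) hne2 hj2)
    rw [e2] at w2
    obtain ⟨wc, wd⟩ := w2.mp wb
    constructor
    · have w3 := (twalk_splice (fun _ => A) (P1 ++ [x]) 0 (x :: P2) hne1 hj3)
      rw [e3] at w3
      exact w3.mpr ⟨wa, twalk_shift wd⟩
    · exact twalk_shift wc
  · exact head?_append_cons P1 x P2 (Q ++ x :: P2)
  · rw [getLast?_append_cons, getLast?_append_cons]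
    have : Q ++ x :: P2 ≠ [] := by simp
    rw [getLast?_cons_ne_nil x this, getLast?_append_cons]
  · simp only [List.length_append, List.length_cons, List.length_nil]; omega

-- chunk 5: Gamma as sup over full walks
def FW (A : ℕ → Fin m → Fin m → EReal) (k : ℕ) (i j : Fin m) : Set EReal :=
  {x | ∃ W, isFullWalk A k i j W ∧ x = tw A 0 W}

theorem FW_finite (A : ℕ → Fin m → Fin m → EReal) (k : ℕ) (i j : Fin m) :
    (FW A k i j).Finite := by
  apply Set.Finite.subset ((List.finite_length_le (Fin m) (k + 1)).image (tw A 0))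
  rintro x ⟨W, hW, rfl⟩
  exact ⟨W, by simp [hW.2.1], rfl⟩

theorem gamma_eq (A : ℕ → Fin m → Fin m → EReal) :
    ∀ (k : ℕ) (i j : Fin m), Gamma A k i j = sSup (FW A k i j)
  | 0, i, j => by
      by_cases hij : i = j
      · subst hij
        have : FW A 0 i i = {0} := by
          ext x
          constructor
          · rintro ⟨W, ⟨hw, hlen, hhead, hlast⟩, rfl⟩
            match W, hlen with
            | [a], _ =>
              simp only [List.head?_cons, Option.some_inj] at hhead
              simp [tw_single]
          · rintro rfl
            exact ⟨[i], ⟨trivial, rfl, rfl, rfl⟩, rfl⟩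
        rw [this, csSup_singleton]
        simp [Gamma]
      · have : FW A 0 i j = ∅ := by
          ext x
          simp only [Set.mem_empty_iff_false, iff_false, FW, Set.mem_setOf_eq]
          rintro ⟨W, ⟨hw, hlen, hhead, hlast⟩, rfl⟩
          match W with
          | [a] =>
            simp only [List.head?_cons, Option.some_inj] at hhead
            simp only [List.getLast?_singleton, Option.some_inj] at hlast
            exact hij (hhead ▸ hlast ▸ rfl)
        rw [this, sSup_empty]
        simp [Gamma, hij]
  | k + 1, i, j => by
      show mp (Gamma A k) (A (k + 1)) i j = _
      unfold mp
      apply le_antisymm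
      · apply iSup_le
        intro s
        by_cases hG : Gamma A k i s = ⊥
        · rw [hG, EReal.bot_add]; exact bot_le
        by_cases hA : A (k + 1) s j = ⊥
        · rw [hA, EReal.add_bot]; exact bot_le
        rw [gamma_eq A k i s] at hG ⊢
        have hmem : sSup (FW A k i s) ∈ FW A k i s := by
          apply Set.Nonempty.csSup_mem _ (FW_finite A k i s)
          rcases Set.eq_empty_or_nonempty (FW A k i s) with he | hne
          · rw [he, sSup_empty] at hG; exact absurd rfl hG
          · exact hne
        obtain ⟨W, ⟨hw, hlen, hhead, hlast⟩, hweight⟩ := hmem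
        have hWne : W ≠ [] := by intro h; rw [h] at hlen; simp at hlen
        have hj : W.getLast? = ([s, j] : List (Fin m)).head? := by rw [hlast]; rfl
        have hsp := tw_splice A W 0 [s, j] hWne hj
        have hwsp := twalk_splice A W 0 [s, j] hWne hj
        have htail : W ++ ([s, j] : List (Fin m)).tail = W ++ [j] := rfl
        rw [htail] at hsp hwsp
        have hlvl : 0 + (W.length - 1) = k := by rw [hlen]; omega
        rw [hlvl] at hsp hwsp
        have htwsj : tw A k [s, j] = A (k + 1) s j := by
          show A (k + 1) s j + 0 = A (k + 1) s j
          exact add_zero _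
        have hwalksj : twalk A k [s, j] := by
          refine (twalk_cons_cons A k s j []).mpr ⟨hA, trivial⟩
        apply le_sSup
        refine ⟨W ++ [j], ⟨hwsp.mpr ⟨hw, hwalksj⟩, by simp [hlen], ?_, by simp⟩, ?_⟩
        · rw [← hhead]
          cases W with
          | nil => exact absurd rfl hWne
          | cons a t => rfl
        · rw [hsp, htwsj, ← hweight]
      · apply sSup_le
        rintro x ⟨W, ⟨hw, hlen, hhead, hlast⟩, rfl⟩
        -- W has length k + 2
        obtain ⟨P, l, hWeq⟩ : ∃ (P : List (Fin m)) (l : Fin m), W = P ++ [l] := by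
          rcases List.eq_nil_or_concat W with rfl | h
          · simp at hlen
          · simpa using h
        have hlj : l = j := by
          rw [hWeq, List.getLast?_concat] at hlast
          exact Option.some_inj.mp hlast
        rw [hlj] at hWeq
        subst hWeq
        have hPlen : P.length = k + 1 := by
          rw [List.length_append, List.length_cons, List.length_nil] at hlen; omega
        have hPne : P ≠ [] := by intro h; rw [h] at hPlen; simp at hPlen
        obtain ⟨s, hs⟩ : ∃ s, P.getLast? = some s := by
          cases h : P.getLast? with
          | none => rw [List.getLast?_eq_none_iff] at h; exact absurd h hPne
          | some s => exact ⟨s, rfl⟩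
        have hj : P.getLast? = ([s, j] : List (Fin m)).head? := by rw [hs]; rfl
        have hsp := tw_splice A P 0 [s, j] hPne hj
        have hwsp := twalk_splice A P 0 [s, j] hPne hj
        have htail : P ++ ([s, j] : List (Fin m)).tail = P ++ [j] := rfl
        rw [htail] at hsp hwsp
        have hlvl : 0 + (P.length - 1) = k := by rw [hPlen]; omega
        rw [hlvl] at hsp hwsp
        obtain ⟨hwP, hwsj⟩ := hwsp.mp hw
        have hheadP : P.head? = some i := by
          rw [← hhead]
          cases P with
          | nil => exact absurd rfl hPne
          | cons a t => rfl
        have hPle : tw A 0 P ≤ Gamma A k i s := by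
          rw [gamma_eq A k i s]
          exact le_sSup ⟨P, ⟨hwP, hPlen, hheadP, hs⟩, rfl⟩
        calc tw A 0 (P ++ [j]) = tw A 0 P + tw A k [s, j] := hsp
          _ = tw A 0 P + A (k + 1) s j := by
              rw [show tw A k [s, j] = A (k + 1) s j + 0 from rfl, add_zero]
          _ ≤ Gamma A k i s + A (k + 1) s j := add_le_add_left hPle _
          _ ≤ ⨆ t, Gamma A k i t + A (k + 1) t j := le_iSup (fun t => Gamma A k i t + A (k + 1) t j) s

-- chunk 6: lambda-star machinery and closed-walk lemma
section Lam

variable {S : Fin m → Fin m → EReal} {one : Fin m}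
variable (hStop : ∀ a b, S a b ≠ ⊤)
variable (hSneg : ∀ W, isCycle S W → (∃ v ∈ W, v ≠ one) → wWeight S W < 0)

theorem walk_real (hStop : ∀ a b, S a b ≠ ⊤) {W : List (Fin m)} (h : isWalk S W) :
    ∃ r : ℝ, wWeight S W = (r : EReal) :=
  tw_real _ W 0 h (fun _ a b _ => hStop a b)

include hSneg in
theorem lamSet_neg : ∀ x ∈ lamSet S one, x < 0 := by
  rintro x ⟨W, hcycW, havoid, r, hr, rfl⟩
  have hlen : 2 ≤ W.length := hcycW.2.1
  have hne : W ≠ [] := by intro h; rw [h] at hlen; simp at hlen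
  obtain ⟨v, hv⟩ : ∃ v, W.head? = some v := by
    cases h : W.head? with
    | none => rw [List.head?_eq_none_iff] at h; exact absurd h hne
    | some v => exact ⟨v, rfl⟩
  have hvW : v ∈ W := by
    cases W with
    | nil => exact absurd rfl hne
    | cons a t => simp only [List.head?_cons, Option.some_inj] at hv; simp [hv]
  have hneg : wWeight S W < 0 := hSneg W hcycW ⟨v, hvW, havoid v hvW⟩
  rw [hr] at hneg
  have hrneg : r < 0 := by exact_mod_cast hneg
  have hL : (0:ℝ) < (W.length : ℝ) - 1 := by
    have : 2 ≤ W.length := hlen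
    have : (2:ℝ) ≤ (W.length : ℝ) := by exact_mod_cast this
    linarith
  exact div_neg_of_neg_of_pos hrneg hL

include hSneg in
theorem bddAbove_lamSet : BddAbove (lamSet S one) :=
  ⟨0, fun x hx => le_of_lt (lamSet_neg hSneg x hx)⟩

include hSneg in
theorem cyc_le_lam {C : List (Fin m)} (hC : isCycle S C) (hav : ∀ v ∈ C, v ≠ one)
    {r : ℝ} (hr : wWeight S C = (r : EReal)) :
    r ≤ lamStar S one * ((C.length : ℝ) - 1) := by
  have hmem : r / ((C.length : ℝ) - 1) ∈ lamSet S one := ⟨C, hC, hav, r, hr, rfl⟩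
  have hle := le_csSup (bddAbove_lamSet hSneg) hmem
  have hL : (0:ℝ) < (C.length : ℝ) - 1 := by
    have : 2 ≤ C.length := hC.2.1
    have : (2:ℝ) ≤ (C.length : ℝ) := by exact_mod_cast this
    linarith
  rw [div_le_iff₀ hL] at hle
  exact hle

/-- Short cycles set. -/
def SC (S : Fin m → Fin m → EReal) (one : Fin m) : Set ℝ :=
  {x : ℝ | ∃ C, isCycle S C ∧ (∀ v ∈ C, v ≠ one) ∧ C.length ≤ m + 1 ∧
    ∃ r : ℝ, wWeight S C = (r : EReal) ∧ x = r / ((C.length : ℝ) - 1)}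

theorem SC_subset : SC S one ⊆ lamSet S one := by
  rintro x ⟨C, h1, h2, h3, r, h4, h5⟩
  exact ⟨C, h1, h2, r, h4, h5⟩

theorem SC_finite : (SC S one).Finite := by
  apply Set.Finite.subset ((List.finite_length_le (Fin m) (m + 1)).image
    (fun C => (wWeight S C).toReal / ((C.length : ℝ) - 1)))
  rintro x ⟨C, h1, h2, h3, r, h4, rfl⟩
  refine ⟨C, h3, ?_⟩
  show (wWeight S C).toReal / ((C.length : ℝ) - 1) = _
  rw [h4, EReal.toReal_coe]

include hStop hSneg in
theorem claim2 : ∀ (N : ℕ) (W : List (Fin m)), W.length ≤ N → isCycle S W →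
    (∀ v ∈ W, v ≠ one) → ∀ r : ℝ, wWeight S W = (r : EReal) →
    (SC S one).Nonempty ∧ r ≤ sSup (SC S one) * ((W.length : ℝ) - 1) := by
  intro N
  induction N with
  | zero =>
    intro W hlen hcycW _ _ _
    exact absurd hcycW.2.1 (by omega)
  | succ N IH =>
    intro W hlen hcycW havoid r hr
    by_cases hshort : W.length ≤ m + 1
    · have hmem : r / ((W.length : ℝ) - 1) ∈ SC S one := ⟨W, hcycW, havoid, hshort, r, hr, rfl⟩
      refine ⟨⟨_, hmem⟩, ?_⟩
      have hbdd : BddAbove (SC S one) :=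
        (bddAbove_lamSet hSneg).mono SC_subset
      have hle := le_csSup hbdd hmem
      have hL : (0:ℝ) < (W.length : ℝ) - 1 := by
        have : 2 ≤ W.length := hcycW.2.1
        have : (2:ℝ) ≤ (W.length : ℝ) := by exact_mod_cast this
        linarith
      rw [div_le_iff₀ hL] at hle
      exact hle
    · -- long cycle: extract a subcycle
      push_neg at hshort
      have hne : W ≠ [] := by intro h; rw [h] at hshort; simp at hshort
      have hnodup : ¬ W.dropLast.Nodup := by
        intro hnd
        have := hnd.length_le_card
        rw [List.length_dropLast, Fintype.card_fin] at this
        omega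
      obtain ⟨P1, x, Q, P2, hsplit⟩ := split_of_not_nodup hnodup
      set ℓ := W.getLast hne with hℓ
      have hW : W = P1 ++ x :: (Q ++ x :: (P2 ++ [ℓ])) := by
        conv_lhs => rw [← List.dropLast_concat_getLast hne]
        rw [hsplit]
        simp
        exact hℓ.symm
      obtain ⟨hwt, hwalks, hhead, hlast, hlens⟩ := surgery S P1 x Q (P2 ++ [ℓ])
      rw [← hW] at hwt hwalks hhead hlast hlens
      set W' := P1 ++ x :: (P2 ++ [ℓ]) with hW'
      set C := x :: (Q ++ [x]) with hC
      obtain ⟨hwW', hwC⟩ := hwalks hcycW.1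
      have hlenW' : 2 ≤ W'.length := by
        rw [hW']; simp only [List.length_append, List.length_cons, List.length_nil]; omega
      have hlenC : 2 ≤ C.length := by
        rw [hC]; simp only [List.length_append, List.length_cons, List.length_nil]; omega
      have hcycW' : isCycle S W' := ⟨hwW', hlenW', by rw [hhead, hlast]; exact hcycW.2.2⟩
      have hcycC : isCycle S C := ⟨hwC, hlenC, by
        rw [hC]
        show (x :: (Q ++ [x])).head? = _
        rw [show x :: (Q ++ [x]) = (x :: Q) ++ [x] by simp, List.getLast?_concat]
        rfl⟩
      have hsubW' : ∀ v ∈ W', v ∈ W := by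
        intro v hv
        rw [hW'] at hv; rw [hW]
        simp only [List.mem_append, List.mem_cons] at hv ⊢
        tauto
      have hsubC : ∀ v ∈ C, v ∈ W := by
        intro v hv
        rw [hC] at hv; rw [hW]
        simp only [List.mem_append, List.mem_cons, List.mem_singleton] at hv ⊢
        tauto
      obtain ⟨rW', hrW'⟩ := walk_real hStop hwW'
      obtain ⟨rC, hrC⟩ := walk_real hStop hwC
      have hrsum : r = rW' + rC := by
        have : (r : EReal) = (rW' : EReal) + (rC : EReal) := by
          rw [← hr, ← hrW', ← hrC]; exact hwt
        rw [← EReal.coe_add] at this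
        exact_mod_cast this
      have hlW' : W'.length ≤ N := by
        have h1 : W'.length + C.length = W.length + 1 := hlens
        omega
      have hlC : C.length ≤ N := by
        have h1 : W'.length + C.length = W.length + 1 := hlens
        omega
      obtain ⟨hSCne, hb1⟩ := IH W' hlW' hcycW' (fun v hv => havoid v (hsubW' v hv)) rW' hrW'
      obtain ⟨-, hb2⟩ := IH C hlC hcycC (fun v hv => havoid v (hsubC v hv)) rC hrC
      refine ⟨hSCne, ?_⟩
      have hlensR : ((W'.length : ℝ) - 1) + ((C.length : ℝ) - 1) = (W.length : ℝ) - 1 := by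
        have h1 : W'.length + C.length = W.length + 1 := hlens
        have : (W'.length : ℝ) + (C.length : ℝ) = (W.length : ℝ) + 1 := by exact_mod_cast h1
        linarith
      calc r = rW' + rC := hrsum
        _ ≤ sSup (SC S one) * ((W'.length : ℝ) - 1) + sSup (SC S one) * ((C.length : ℝ) - 1) :=
            add_le_add hb1 hb2
        _ = sSup (SC S one) * ((W.length : ℝ) - 1) := by rw [← mul_add, hlensR]

include hSneg in
theorem lamStar_neg (hcyc : ∃ W, isCycle S W ∧ ∀ v ∈ W, v ≠ one)
    (hStop : ∀ a b, S a b ≠ ⊤) : lamStar S one < 0 := by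
  obtain ⟨W, hcycW, havoid⟩ := hcyc
  obtain ⟨r, hr⟩ := walk_real hStop hcycW.1
  obtain ⟨hSCne, -⟩ := claim2 hStop hSneg W.length W le_rfl hcycW havoid r hr
  have hμmem := Set.Nonempty.csSup_mem hSCne (SC_finite)
  have hμneg : sSup (SC S one) < 0 := lamSet_neg hSneg _ (SC_subset hμmem)
  have hlamle : lamStar S one ≤ sSup (SC S one) := by
    apply csSup_le
    · exact ⟨_, SC_subset hμmem⟩
    · rintro y ⟨W2, hcycW2, havoid2, r2, hr2, rfl⟩
      obtain ⟨-, hb⟩ := claim2 hStop hSneg W2.length W2 le_rfl hcycW2 havoid2 r2 hr2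
      have hL : (0:ℝ) < (W2.length : ℝ) - 1 := by
        have : 2 ≤ W2.length := hcycW2.2.1
        have : (2:ℝ) ≤ (W2.length : ℝ) := by exact_mod_cast this
        linarith
      rw [div_le_iff₀ hL]
      exact hb
  exact lt_of_le_of_lt hlamle hμneg

include hSneg in
theorem closed_le (hS00 : S one one = 0) :
    ∀ (N : ℕ) (W : List (Fin m)), W.length ≤ N → W.head? = some one →
      W.getLast? = some one → wWeight S W ≤ 0 := by
  intro N
  induction N with
  | zero =>
    intro W hlen hh _
    match W, hlen with
    | [], _ => simp at hh
  | succ N IH =>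
    intro W hlen hh hl
    have hne : W ≠ [] := by intro h; rw [h] at hh; simp at hh
    by_cases hwalk : isWalk S W
    swap
    · rw [wWeight, tw_bot _ W 0 hne hwalk]; exact bot_le
    obtain ⟨rest, rfl⟩ : ∃ rest, W = one :: rest := by
      cases W with
      | nil => exact absurd rfl hne
      | cons a t =>
        simp only [List.head?_cons, Option.some_inj] at hh
        exact ⟨t, by rw [hh]⟩
    cases rest with
    | nil => exact le_of_eq (tw_single _ 0 one)
    | cons b t =>
      -- one ∈ (b :: t)
      have hlast' : (b :: t).getLast? = some one := by
        rwa [List.getLast?_cons_cons] at hl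
      have hmem : one ∈ b :: t :=
        List.mem_of_mem_getLast? (by rw [hlast']; rfl)
      obtain ⟨t1, u, hsplit, ht1⟩ := first_split hmem
      have hWeq : one :: b :: t = (one :: (t1 ++ [one])) ++ (one :: u).tail := by
        rw [hsplit]; simp
      have hjunc : (one :: (t1 ++ [one])).getLast? = (one :: u).head? := by
        rw [show one :: (t1 ++ [one]) = (one :: t1) ++ [one] by simp, List.getLast?_concat]
        rfl
      have hCne : (one :: (t1 ++ [one])) ≠ ([] : List (Fin m)) := by simp
      have hsp := tw_splice (fun _ => S) (one :: (t1 ++ [one])) 0 (one :: u) hCne hjunc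
      rw [← hWeq] at hsp
      have hwsp := twalk_splice (fun _ => S) (one :: (t1 ++ [one])) 0 (one :: u) hCne hjunc
      rw [← hWeq] at hwsp
      obtain ⟨hwC, hwu⟩ := hwsp.mp hwalk
      have hwu' : isWalk S (one :: u) := twalk_shift hwu
      -- weight of the cycle part
      have hCle : wWeight S (one :: (t1 ++ [one])) ≤ 0 := by
        cases t1 with
        | nil =>
          show tw (fun _ => S) 0 [one, one] ≤ 0
          rw [show tw (fun _ => S) 0 [one, one] = S one one + 0 from rfl, hS00, add_zero]
        | cons c t2 =>
          apply le_of_lt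
          apply hSneg
          · refine ⟨hwC, ?_, ?_⟩
            · simp only [List.length_cons, List.length_append, List.length_nil]; omega
            · rw [hjunc]; rfl
          · refine ⟨c, by simp, ?_⟩
            exact ht1 c (by simp)
      -- weight of the remaining closed walk
      have hule : wWeight S (one :: u) ≤ 0 := by
        apply IH (one :: u)
        · have h1 : t.length + 1 = t1.length + (u.length + 1) := by
            have h2 := congrArg List.length hsplit
            simpa using h2
          simp only [List.length_cons] at hlen ⊢
          omega
        · rfl
        · cases u with
          | nil => simp
          | cons d u2 =>
            rw [hsplit, getLast?_append_cons t1 one (d :: u2)] at hlast'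
            exact hlast'
      calc wWeight S (one :: b :: t)
          = wWeight S (one :: (t1 ++ [one])) + tw (fun _ => S) (0 + ((one :: (t1 ++ [one])).length - 1)) (one :: u) := hsp
        _ = wWeight S (one :: (t1 ++ [one])) + wWeight S (one :: u) := by rw [tw_shift]
        _ ≤ 0 + 0 := add_le_add hCle hule
        _ = 0 := add_zero 0

-- chunk 7: path extraction with lambda-star bound
include hStop hSneg in
theorem ext_lemma : ∀ (N : ℕ) (W : List (Fin m)), W.length ≤ N → isWalk S W →
    ((∀ v ∈ W.dropLast, v ≠ one) ∨ (∀ v ∈ W.tail, v ≠ one)) →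
    ∃ (P : List (Fin m)) (rW rP : ℝ), isPath S P ∧ P.head? = W.head? ∧
      P.getLast? = W.getLast? ∧ (∀ v ∈ P, v ∈ W) ∧
      wWeight S W = (rW : EReal) ∧ wWeight S P = (rP : EReal) ∧
      rW ≤ rP + lamStar S one * ((W.length : ℝ) - (P.length : ℝ)) := by
  intro N
  induction N with
  | zero =>
    intro W hlen hwalk _
    have := twalk_ne_nil hwalk
    have : W.length = 0 := by omega
    rw [List.length_eq_zero_iff] at this
    exact absurd this (twalk_ne_nil hwalk)
  | succ N IH =>
    intro W hlen hwalk hphi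
    by_cases hnd : W.Nodup
    · obtain ⟨rW, hrW⟩ := walk_real hStop hwalk
      refine ⟨W, rW, rW, ⟨hwalk, hnd⟩, rfl, rfl, fun v hv => hv, hrW, hrW, ?_⟩
      have : (W.length : ℝ) - (W.length : ℝ) = 0 := by ring
      rw [this, mul_zero, add_zero]
    · obtain ⟨P1, x, Q, P2, hW⟩ := split_of_not_nodup hnd
      obtain ⟨hwt, hwalks, hhead, hlast, hlens⟩ := surgery S P1 x Q P2
      rw [← hW] at hwt hwalks hhead hlast hlens
      set W' := P1 ++ x :: P2 with hW'def
      set C := x :: (Q ++ [x]) with hCdef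
      obtain ⟨hwW', hwC⟩ := hwalks hwalk
      -- membership of pieces in W
      have hsubW' : ∀ v ∈ W', v ∈ W := by
        intro v hv
        rw [hW'def] at hv; rw [hW]
        simp only [List.mem_append, List.mem_cons] at hv ⊢
        tauto
      have hsubC : ∀ v ∈ C, v ∈ W := by
        intro v hv
        rw [hCdef] at hv; rw [hW]
        simp only [List.mem_append, List.mem_cons, List.mem_singleton] at hv ⊢
        tauto
      -- transfer of the boundary condition
      have hWsplit2 : W = (P1 ++ x :: Q) ++ (x :: P2) := by rw [hW]; simp
      have hkey : (x ≠ one ∧ ∀ q ∈ Q, q ≠ one) ∧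
          ((∀ v ∈ W'.dropLast, v ≠ one) ∨ (∀ v ∈ W'.tail, v ≠ one)) := by
        rcases hphi with hL | hR
        · have hdropW : W.dropLast = (P1 ++ x :: Q) ++ (x :: P2).dropLast := by
            rw [hWsplit2]
            exact List.dropLast_append_of_ne_nil (by simp)
          have hdropW' : W'.dropLast = P1 ++ (x :: P2).dropLast := by
            rw [hW'def]
            exact List.dropLast_append_of_ne_nil (by simp)
          rw [hdropW] at hL
          refine ⟨⟨hL x (by simp), fun q hq => hL q (by simp [hq])⟩, Or.inl ?_⟩
          intro v hv
          rw [hdropW'] at hv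
          apply hL
          simp only [List.mem_append, List.mem_cons] at hv ⊢
          tauto
        · refine ⟨⟨?_, ?_⟩, Or.inr ?_⟩
          · apply hR
            cases P1 with
            | nil => rw [hW]; simp
            | cons p ps => rw [hW]; simp
          · intro q hq
            apply hR
            cases P1 with
            | nil => rw [hW]; simp [hq]
            | cons p ps => rw [hW]; simp [hq]
          · intro v hv
            apply hR
            cases P1 with
            | nil =>
              rw [hW'def] at hv
              rw [hW]
              simp only [List.nil_append, List.tail_cons] at hv ⊢
              simp [List.mem_append, hv]
            | cons p ps =>
              rw [hW'def] at hv
              rw [hW]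
              simp only [List.cons_append, List.tail_cons] at hv ⊢
              simp only [List.mem_append, List.mem_cons, List.mem_singleton] at hv ⊢
              tauto
      obtain ⟨⟨hxone, hQone⟩, hphi'⟩ := hkey
      have hCav : ∀ v ∈ C, v ≠ one := by
        intro v hv
        have hv' : v = x ∨ v ∈ Q := by
          rw [hCdef] at hv
          simp only [List.mem_cons, List.mem_append, List.mem_singleton,
            List.not_mem_nil, or_false] at hv
          tauto
        rcases hv' with rfl | hv'
        · exact hxone
        · exact hQone v hv'
      have hlenC : 2 ≤ C.length := by
        rw [hCdef]; simp only [List.length_cons, List.length_append, List.length_nil]; omega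
      have hcycC : isCycle S C := ⟨hwC, hlenC, by
        rw [hCdef]
        show (x :: (Q ++ [x])).head? = _
        rw [show x :: (Q ++ [x]) = (x :: Q) ++ [x] by simp, List.getLast?_concat]
        rfl⟩
      obtain ⟨rC, hrC⟩ := walk_real hStop hwC
      have hCbound := cyc_le_lam hSneg hcycC hCav hrC
      have hlenW' : W'.length ≤ N := by
        have h1 : W'.length + C.length = W.length + 1 := hlens
        omega
      obtain ⟨P, rW', rP, hPpath, hPhead, hPlast, hPsub, hrW', hrP, hPbound⟩ :=
        IH W' hlenW' hwW' hphi'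
      have hrsum : wWeight S W = ((rW' + rC : ℝ) : EReal) := by
        rw [hwt, hrW', hrC, ← EReal.coe_add]
      refine ⟨P, rW' + rC, rP, hPpath, by rw [hPhead, hhead], by rw [hPlast, hlast],
        fun v hv => hsubW' v (hPsub v hv), hrsum, hrP, ?_⟩
      have hc : (W'.length : ℝ) + (C.length : ℝ) = (W.length : ℝ) + 1 := by
        exact_mod_cast hlens
      have hkey2 : lamStar S one * ((W'.length : ℝ) - (P.length : ℝ))
          + lamStar S one * ((C.length : ℝ) - 1)
          = lamStar S one * ((W.length : ℝ) - (P.length : ℝ)) := by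
        rw [← mul_add]
        congr 1
        linarith
      linarith

end Lam


-- chunk 8: helpers specific to the main setting
theorem head?_append_left {α : Type*} {l1 : List α} (l2 : List α) (h : l1 ≠ []) :
    (l1 ++ l2).head? = l1.head? := by
  cases l1 with
  | nil => exact absurd rfl h
  | cons a t => rfl

section Main

variable {n : ℕ} {A : ℕ → Fin (n + 2) → Fin (n + 2) → EReal}
  {Asup : Fin (n + 2) → Fin (n + 2) → EReal} {k : ℕ}

variable (hXle : ∀ l, 1 ≤ l → l ≤ k → ∀ a b, A l a b ≤ Asup a b)

include hXle in
theorem tw_le_sup (s : ℕ) (W : List (Fin (n + 2))) (h : s + W.length ≤ k + 1) :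
    tw A s W ≤ wWeight Asup W := by
  apply tw_le_tw A (fun _ => Asup) W s 0
  intro d a b hd
  exact hXle (s + d + 1) (by omega) (by omega) a b

include hXle in
theorem twalk_sup (s : ℕ) (W : List (Fin (n + 2))) (h : s + W.length ≤ k + 1)
    (hw : twalk A s W) : isWalk Asup W := by
  apply twalk_mono A (fun _ => Asup) W s 0 _ hw
  intro d a b hd
  exact hXle (s + d + 1) (by omega) (by omega) a b

variable (hStop : ∀ a b, Asup a b ≠ ⊤)
variable (hSneg : ∀ W, isCycle Asup W → (∃ v ∈ W, v ≠ (0 : Fin (n + 2))) → wWeight Asup W < 0)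
variable (hlam : lamStar Asup 0 < 0)

-- initial walks: weight bounded via alpha and lambda-star
include hXle hStop hSneg hlam in
theorem initial_bound {w a : ℝ} {i : Fin (n + 2)}
    (hwa : ((a : ℝ) : EReal) = alphaE Asup 0 i)
    {W1 : List (Fin (n + 2))} (hW1 : isInitialWalk A 0 k i W1)
    (hatt : tw A 0 W1 = ((w : ℝ) : EReal)) :
    w ≤ a + lamStar Asup 0 * ((W1.length : ℝ) - (n + 2)) ∧ 1 ≤ W1.length := by
  obtain ⟨hwalk, hlen, hhead, hlast, hav⟩ := hW1
  have hne : W1 ≠ [] := by intro h; rw [h] at hhead; simp at hhead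
  have hlen1 : 1 ≤ W1.length := by cases W1 with | nil => exact absurd rfl hne | cons _ _ => simp
  have hwsup : isWalk Asup W1 := twalk_sup hXle 0 W1 (by omega) hwalk
  obtain ⟨P, rW, rP, hPpath, hPhead, hPlast, hPsub, hrW, hrP, hbound⟩ :=
    ext_lemma hStop hSneg W1.length W1 le_rfl hwsup (Or.inl hav)
  -- w ≤ rW
  have hwle : w ≤ rW := by
    have h1 : tw A 0 W1 ≤ wWeight Asup W1 := tw_le_sup hXle 0 W1 (by omega)
    rw [hatt, hrW] at h1
    exact_mod_cast h1
  -- rP ≤ a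
  have hrPa : rP ≤ a := by
    have hmem : ((rP : ℝ) : EReal) ∈ {x : EReal | ∃ W, isPath Asup W ∧ W.head? = some i ∧
        W.getLast? = some 0 ∧ x = wWeight Asup W} := by
      exact ⟨P, hPpath, by rw [hPhead, hhead], by rw [hPlast, hlast], hrP.symm⟩
    have := le_sSup hmem
    rw [← alphaE, ← hwa] at this
    exact_mod_cast this
  have hPcard : P.length ≤ n + 2 := by
    have := hPpath.2.length_le_card
    rwa [Fintype.card_fin] at this
  have hmul : lamStar Asup 0 * ((W1.length : ℝ) - (P.length : ℝ))
      ≤ lamStar Asup 0 * ((W1.length : ℝ) - (n + 2)) := by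
    apply mul_le_mul_of_nonpos_left _ hlam.le
    have : (P.length : ℝ) ≤ (n + 2 : ℝ) := by exact_mod_cast hPcard
    linarith
  refine ⟨by linarith, hlen1⟩

include hXle hStop hSneg hlam in
theorem final_bound {v b : ℝ} {j : Fin (n + 2)}
    (hvb : ((b : ℝ) : EReal) = betaE Asup 0 j)
    {s : ℕ} {W2 : List (Fin (n + 2))} (hW2 : isFinalWalk A 0 k j s W2)
    (hatt : tw A s W2 = ((v : ℝ) : EReal)) :
    v ≤ b + lamStar Asup 0 * ((W2.length : ℝ) - (n + 2)) ∧ 1 ≤ W2.length := by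
  obtain ⟨hwalk, hslen, hhead, hlast, hav⟩ := hW2
  have hne : W2 ≠ [] := by intro h; rw [h] at hhead; simp at hhead
  have hlen1 : 1 ≤ W2.length := by cases W2 with | nil => exact absurd rfl hne | cons _ _ => simp
  have hlev : s + W2.length ≤ k + 1 := by omega
  have hwsup : isWalk Asup W2 := twalk_sup hXle s W2 hlev hwalk
  obtain ⟨P, rW, rP, hPpath, hPhead, hPlast, hPsub, hrW, hrP, hbound⟩ :=
    ext_lemma hStop hSneg W2.length W2 le_rfl hwsup (Or.inr hav)
  have hwle : v ≤ rW := by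
    have h1 : tw A s W2 ≤ wWeight Asup W2 := tw_le_sup hXle s W2 hlev
    rw [hatt, hrW] at h1
    exact_mod_cast h1
  have hrPb : rP ≤ b := by
    have hmem : ((rP : ℝ) : EReal) ∈ {x : EReal | ∃ W, isPath Asup W ∧ W.head? = some 0 ∧
        W.getLast? = some j ∧ x = wWeight Asup W} :=
      ⟨P, hPpath, by rw [hPhead, hhead], by rw [hPlast, hlast], hrP.symm⟩
    have := le_sSup hmem
    rw [← betaE, ← hvb] at this
    exact_mod_cast this
  have hPcard : P.length ≤ n + 2 := by
    have := hPpath.2.length_le_card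
    rwa [Fintype.card_fin] at this
  have hmul : lamStar Asup 0 * ((W2.length : ℝ) - (P.length : ℝ))
      ≤ lamStar Asup 0 * ((W2.length : ℝ) - (n + 2)) := by
    apply mul_le_mul_of_nonpos_left _ hlam.le
    have : (P.length : ℝ) ≤ (n + 2 : ℝ) := by exact_mod_cast hPcard
    linarith
  exact ⟨by linarith, hlen1⟩

-- chunk 9: main_le
include hXle hStop hSneg hlam in
theorem main_le (hk : 1 ≤ k) {w v : Fin (n + 2) → ℝ}
    (hw : ∀ i, ((w i : ℝ) : EReal) = wStar A 0 k i)
    (hv : ∀ j, ((v j : ℝ) : EReal) = vStar A 0 k j)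
    (hS00 : Asup 0 0 = 0)
    (hk1 : ∀ i j, ∀ g : ℝ, gammaE Asup 0 i j = (g : EReal) →
      (k : ℝ) > (w i + v j - g) / lamStar Asup 0 + ((n + 2 : ℝ) - 1)) :
    ∀ i j x, x ∈ FW A k i j → x ≤ ((w i : ℝ) : EReal) + ((v j : ℝ) : EReal) := by
  rintro i j x ⟨W, ⟨hwW, hWlen, hWhead, hWlast⟩, rfl⟩
  by_cases h0 : ∀ u ∈ W, u ≠ (0 : Fin (n + 2))
  · -- the walk avoids node 0
    have hwsup : isWalk Asup W := twalk_sup hXle 0 W (by omega) hwW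
    have hΦ : ∀ u ∈ W.dropLast, u ≠ (0 : Fin (n + 2)) :=
      fun u hu => h0 u (List.dropLast_subset _ hu)
    obtain ⟨P, rW, rP, hPpath, hPhead, hPlast, hPsub, hrW, hrP, hbound⟩ :=
      ext_lemma hStop hSneg W.length W le_rfl hwsup (Or.inl hΦ)
    have hPav : ∀ u ∈ P, u ≠ (0 : Fin (n + 2)) := fun u hu => h0 u (hPsub u hu)
    have hGne : ((rP : ℝ) : EReal) ∈ {x : EReal | ∃ Wp, isPath Asup Wp ∧
        Wp.head? = some i ∧ Wp.getLast? = some j ∧ (∀ u ∈ Wp, u ≠ (0 : Fin (n + 2))) ∧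
        x = wWeight Asup Wp} :=
      ⟨P, hPpath, by rw [hPhead, hWhead], by rw [hPlast, hWlast], hPav, hrP.symm⟩
    have hGfin : {x : EReal | ∃ Wp, isPath Asup Wp ∧
        Wp.head? = some i ∧ Wp.getLast? = some j ∧ (∀ u ∈ Wp, u ≠ (0 : Fin (n + 2))) ∧
        x = wWeight Asup Wp}.Finite := by
      apply Set.Finite.subset ((List.finite_length_le (Fin (n + 2)) (n + 2)).image
        (wWeight Asup))
      rintro y ⟨Wp, hp, _, _, _, rfl⟩
      refine ⟨Wp, ?_, rfl⟩
      have := hp.2.length_le_card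
      rwa [Fintype.card_fin] at this
    have hgam : gammaE Asup 0 i j = sSup {x : EReal | ∃ Wp, isPath Asup Wp ∧
        Wp.head? = some i ∧ Wp.getLast? = some j ∧ (∀ u ∈ Wp, u ≠ (0 : Fin (n + 2))) ∧
        x = wWeight Asup Wp} := rfl
    obtain ⟨Wg, hWgp, -, -, -, hWgw⟩ := Set.Nonempty.csSup_mem ⟨_, hGne⟩ hGfin
    obtain ⟨g, hg⟩ : ∃ g : ℝ, gammaE Asup 0 i j = (g : EReal) := by
      obtain ⟨g, hgr⟩ := walk_real hStop hWgp.1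
      exact ⟨g, by rw [hgam, hWgw, hgr]⟩
    have hrPg : rP ≤ g := by
      have h1 := le_sSup hGne
      rw [← hgam, hg] at h1
      exact_mod_cast h1
    have hk1' := hk1 i j g hg
    have hstep : lamStar Asup 0 * ((k : ℝ) - (n + 1)) < w i + v j - g := by
      have h2 : (w i + v j - g) / lamStar Asup 0 < (k : ℝ) - ((n : ℝ) + 1) := by linarith
      rw [div_lt_iff_of_neg hlam] at h2
      linarith
    have hPlen : P.length ≤ n + 1 := by
      have h1 : P.length = P.toFinset.card := (List.toFinset_card_of_nodup hPpath.2).symm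
      have h2 : P.toFinset ⊆ Finset.univ.erase (0 : Fin (n + 2)) := by
        intro u hu
        rw [Finset.mem_erase]
        exact ⟨hPav u (List.mem_toFinset.mp hu), Finset.mem_univ u⟩
      have h3 := Finset.card_le_card h2
      rw [Finset.card_erase_of_mem (Finset.mem_univ _), Finset.card_univ,
        Fintype.card_fin] at h3
      omega
    have hmul : lamStar Asup 0 * ((W.length : ℝ) - (P.length : ℝ))
        ≤ lamStar Asup 0 * ((k : ℝ) - (n + 1)) := by
      apply mul_le_mul_of_nonpos_left _ hlam.le
      have c1 : (W.length : ℝ) = (k : ℝ) + 1 := by exact_mod_cast hWlen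
      have c2 : (P.length : ℝ) ≤ (n : ℝ) + 1 := by exact_mod_cast hPlen
      linarith
    have hfinal : rW ≤ w i + v j := by linarith
    calc tw A 0 W ≤ wWeight Asup W := tw_le_sup hXle 0 W (by omega)
      _ = ((rW : ℝ) : EReal) := hrW
      _ ≤ (((w i + v j : ℝ)) : EReal) := by exact_mod_cast hfinal
      _ = ((w i : ℝ) : EReal) + ((v j : ℝ) : EReal) := EReal.coe_add _ _
  · -- the walk passes through node 0
    have h0W : (0 : Fin (n + 2)) ∈ W := by
      push_neg at h0
      obtain ⟨u, hu, hu0⟩ := h0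
      exact hu0 ▸ hu
    obtain ⟨t, u, hWs, ht⟩ := first_split h0W
    have hWeq : W = (t ++ [(0 : Fin (n + 2))]) ++ ((0 : Fin (n + 2)) :: u).tail := by
      rw [hWs]; simp
    have hjunc : (t ++ [(0 : Fin (n + 2))]).getLast? = ((0 : Fin (n + 2)) :: u).head? := by
      rw [List.getLast?_concat]; rfl
    have hWine : t ++ [(0 : Fin (n + 2))] ≠ [] := by simp
    have hsp := tw_splice A (t ++ [(0 : Fin (n + 2))]) 0 ((0 : Fin (n + 2)) :: u) hWine hjunc
    rw [← hWeq] at hsp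
    have hwsp := twalk_splice A (t ++ [(0 : Fin (n + 2))]) 0 ((0 : Fin (n + 2)) :: u)
      hWine hjunc
    rw [← hWeq] at hwsp
    obtain ⟨hw1, hwR⟩ := hwsp.mp hwW
    have hlW : t.length + (u.length + 1) = k + 1 := by
      have := congrArg List.length hWs
      rw [hWlen] at this
      simpa using this.symm
    have hl1 : 0 + ((t ++ [(0 : Fin (n + 2))]).length - 1) = t.length := by simp
    rw [hl1] at hsp hwR
    -- the initial part
    have hinit_le : tw A 0 (t ++ [(0 : Fin (n + 2))]) ≤ ((w i : ℝ) : EReal) := by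
      rw [hw i]
      apply le_sSup
      refine ⟨t ++ [(0 : Fin (n + 2))], ⟨hw1, by simp; omega, ?_, List.getLast?_concat,
        by rw [List.dropLast_concat]; exact ht⟩, rfl⟩
      rw [← hWhead, hWs]
      exact head?_append_cons t 0 [] u
    -- split the rest at the last occurrence of 0
    have h0R : (0 : Fin (n + 2)) ∈ ((0 : Fin (n + 2)) :: u).reverse := by simp
    obtain ⟨t2, u2, hRs, ht2⟩ := first_split h0R
    have hRdec : (0 : Fin (n + 2)) :: u
        = (u2.reverse ++ [(0 : Fin (n + 2))]) ++ ((0 : Fin (n + 2)) :: t2.reverse).tail := by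
      conv_lhs => rw [← List.reverse_reverse ((0 : Fin (n + 2)) :: u), hRs]
      simp
    have hjunc2 : (u2.reverse ++ [(0 : Fin (n + 2))]).getLast?
        = ((0 : Fin (n + 2)) :: t2.reverse).head? := by
      rw [List.getLast?_concat]; rfl
    have hRmidne : u2.reverse ++ [(0 : Fin (n + 2))] ≠ [] := by simp
    have hsp2 := tw_splice A (u2.reverse ++ [(0 : Fin (n + 2))]) t.length
      ((0 : Fin (n + 2)) :: t2.reverse) hRmidne hjunc2
    rw [← hRdec] at hsp2
    have hwsp2 := twalk_splice A (u2.reverse ++ [(0 : Fin (n + 2))]) t.length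
      ((0 : Fin (n + 2)) :: t2.reverse) hRmidne hjunc2
    rw [← hRdec] at hwsp2
    obtain ⟨hwmid, hwfin⟩ := hwsp2.mp hwR
    have hlR : t2.length + (u2.length + 1) = u.length + 1 := by
      have := congrArg List.length hRs
      simpa using this.symm
    have hl2 : t.length + ((u2.reverse ++ [(0 : Fin (n + 2))]).length - 1)
        = t.length + u2.length := by simp
    rw [hl2] at hsp2 hwfin
    -- middle part is a closed walk at 0 with nonpositive weight
    have hmid_le : tw A t.length (u2.reverse ++ [(0 : Fin (n + 2))]) ≤ 0 := by
      have hhead : (u2.reverse ++ [(0 : Fin (n + 2))]).head? = some 0 := by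
        have h1 : ((0 : Fin (n + 2)) :: u).head? = some 0 := rfl
        rw [hRdec, head?_append_left _ hRmidne] at h1
        exact h1
      calc tw A t.length (u2.reverse ++ [(0 : Fin (n + 2))])
          ≤ wWeight Asup (u2.reverse ++ [(0 : Fin (n + 2))]) := by
            apply tw_le_sup hXle
            simp only [List.length_append, List.length_reverse, List.length_cons,
              List.length_nil]
            omega
        _ ≤ 0 := closed_le hSneg hS00 _ _ le_rfl hhead List.getLast?_concat
    -- final part
    have hlastR : ((0 : Fin (n + 2)) :: u).getLast? = some j := by
      rw [← hWlast, hWs, getLast?_append_cons]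
    have hfin_le : tw A (t.length + u2.length) ((0 : Fin (n + 2)) :: t2.reverse)
        ≤ ((v j : ℝ) : EReal) := by
      rw [hv j]
      apply le_sSup
      refine ⟨t.length + u2.length, (0 : Fin (n + 2)) :: t2.reverse,
        ⟨hwfin, by simp; omega, rfl, ?_, ?_⟩, rfl⟩
      · -- getLast? = some j
        cases t2 with
        | nil =>
          have : ((0 : Fin (n + 2)) :: u).reverse.head? = some 0 := by rw [hRs]; rfl
          rw [List.head?_reverse] at this
          rw [hlastR] at this
          simpa using this.symm
        | cons c cs =>
          have h1 : ((0 : Fin (n + 2)) :: u).reverse.head? = some c := by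
            rw [hRs]; rfl
          rw [List.head?_reverse, hlastR] at h1
          have h2 : (c :: cs).reverse ≠ [] := by simp
          rw [getLast?_cons_ne_nil _ h2, List.getLast?_reverse, List.head?_cons,
            Option.some_inj.mp h1]
      · intro x hx
        simp only [List.tail_cons, List.mem_reverse] at hx
        exact ht2 x hx
    -- combine
    calc tw A 0 W
        = tw A 0 (t ++ [(0 : Fin (n + 2))]) + tw A t.length ((0 : Fin (n + 2)) :: u) := hsp
      _ = tw A 0 (t ++ [(0 : Fin (n + 2))])
          + (tw A t.length (u2.reverse ++ [(0 : Fin (n + 2))])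
            + tw A (t.length + u2.length) ((0 : Fin (n + 2)) :: t2.reverse)) := by rw [hsp2]
      _ ≤ ((w i : ℝ) : EReal) + (0 + ((v j : ℝ) : EReal)) :=
          add_le_add hinit_le (add_le_add hmid_le hfin_le)
      _ = ((w i : ℝ) : EReal) + ((v j : ℝ) : EReal) := by rw [zero_add]

-- chunk 10: main_ge
include hXle hStop hSneg hlam in
theorem main_ge (hk : 1 ≤ k)
    (hA00 : ∀ l, 1 ≤ l → l ≤ k → A l 0 0 = 0)
    {w v a b : Fin (n + 2) → ℝ}
    (ha : ∀ i, ((a i : ℝ) : EReal) = alphaE Asup 0 i)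
    (hb : ∀ j, ((b j : ℝ) : EReal) = betaE Asup 0 j)
    (hw : ∀ i, ((w i : ℝ) : EReal) = wStar A 0 k i)
    (hv : ∀ j, ((v j : ℝ) : EReal) = vStar A 0 k j)
    (hk2 : ∀ i j, (k : ℝ) >
      (w i - a i + v j - b j) / lamStar Asup 0 + 2 * ((n + 2 : ℝ) - 1)) :
    ∀ i j, ((w i : ℝ) : EReal) + ((v j : ℝ) : EReal) ∈ FW A k i j := by
  intro i j
  -- attained optimal initial walk
  have hfin1 : {x : EReal | ∃ W, isInitialWalk A 0 k i W ∧ x = tw A 0 W}.Finite := by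
    apply Set.Finite.subset ((List.finite_length_le (Fin (n + 2)) (k + 1)).image (tw A 0))
    rintro x ⟨W, hW, rfl⟩
    refine ⟨W, ?_, rfl⟩
    have := hW.2.1
    simp only [Set.mem_setOf_eq]
    omega
  obtain ⟨W1, hW1, hatt1⟩ := sSup_mem_of_real hfin1 (hw i).symm
  -- attained optimal final walk
  have hfin2 : {x : EReal | ∃ s W, isFinalWalk A 0 k j s W ∧ x = tw A s W}.Finite := by
    apply Set.Finite.subset ((List.finite_length_le (Fin (n + 2)) (k + 1)).image
      (fun W => tw A (k - (W.length - 1)) W))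
    rintro x ⟨s, W, hf, rfl⟩
    have hs := hf.2.1
    refine ⟨W, by simp only [Set.mem_setOf_eq]; omega, ?_⟩
    show tw A (k - (W.length - 1)) W = tw A s W
    have : k - (W.length - 1) = s := by omega
    rw [this]
  obtain ⟨s2, W2, hW2, hatt2⟩ := sSup_mem_of_real hfin2 (hv j).symm
  obtain ⟨hib, hlen1⟩ := initial_bound hXle hStop hSneg hlam (ha i) hW1 hatt1.symm
  obtain ⟨hfb, hlen2⟩ := final_bound hXle hStop hSneg hlam (hb j) hW2 hatt2.symm
  have hs2 : s2 + (W2.length - 1) = k := hW2.2.1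
  -- combined length bound
  have hll : (W1.length - 1) + (W2.length - 1) ≤ k := by
    by_contra hcon
    push_neg at hcon
    have c1 : (k : ℝ) + 3 ≤ (W1.length : ℝ) + (W2.length : ℝ) := by
      have : k + 3 ≤ W1.length + W2.length := by omega
      exact_mod_cast this
    have hstep : lamStar Asup 0 * ((k : ℝ) - 2 * ((n : ℝ) + 1))
        < w i - a i + v j - b j := by
      have h2 : (w i - a i + v j - b j) / lamStar Asup 0
          < (k : ℝ) - 2 * ((n : ℝ) + 1) := by
        have := hk2 i j
        push_cast at this ⊢
        linarith
      rw [div_lt_iff_of_neg hlam] at h2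
      linarith
    have hmul : lamStar Asup 0 * (((W1.length : ℝ) - (n + 2)) + ((W2.length : ℝ) - (n + 2)))
        ≤ lamStar Asup 0 * ((k : ℝ) + 1 - 2 * ((n : ℝ) + 1)) := by
      apply mul_le_mul_of_nonpos_left _ hlam.le
      linarith
    rw [mul_add] at hmul
    have hexp : lamStar Asup 0 * ((k : ℝ) + 1 - 2 * ((n : ℝ) + 1))
        = lamStar Asup 0 * ((k : ℝ) - 2 * ((n : ℝ) + 1)) + lamStar Asup 0 := by ring
    rw [hexp] at hmul
    linarith
  -- construct a full walk of weight w i + v j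
  have hW1ne : W1 ≠ [] := by
    intro h; rw [h] at hlen1; simp at hlen1
  have hl1s : W1.length - 1 ≤ s2 := by omega
  set p := s2 - (W1.length - 1) with hp
  -- padding at node 0
  have hrep : ∀ (q l : ℕ), (∀ t', l + 1 ≤ t' → t' ≤ l + q → A t' 0 0 = 0) →
      tw A l (List.replicate (q + 1) (0 : Fin (n + 2))) = 0 ∧
      twalk A l (List.replicate (q + 1) (0 : Fin (n + 2))) := by
    intro q
    induction q with
    | zero => exact fun l _ => ⟨rfl, trivial⟩
    | succ q IH =>
      intro l h
      have h1 : A (l + 1) 0 0 = 0 := h (l + 1) le_rfl (by omega)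
      have IH' := IH (l + 1) (fun t' ha1 ha2 => h t' (by omega) (by omega))
      constructor
      · show tw A l ((0 : Fin (n + 2)) :: (0 : Fin (n + 2)) :: List.replicate q 0) = 0
        rw [tw_cons_cons, h1, zero_add]
        exact IH'.1
      · show twalk A l ((0 : Fin (n + 2)) :: (0 : Fin (n + 2)) :: List.replicate q 0)
        rw [twalk_cons_cons]
        refine ⟨by rw [h1]; simp, IH'.2⟩
  obtain ⟨hreptw, hrepwalk⟩ := hrep p (W1.length - 1) (by
    intro t' h1' h2'
    exact hA00 t' (by omega) (by omega))
  have hW1last : W1.getLast? = some 0 := hW1.2.2.2.1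
  have hjZ : W1.getLast? = (List.replicate (p + 1) (0 : Fin (n + 2))).head? := by
    rw [hW1last, List.replicate_succ]; rfl
  have hspZ := tw_splice A W1 0 (List.replicate (p + 1) (0 : Fin (n + 2))) hW1ne hjZ
  have hwspZ := twalk_splice A W1 0 (List.replicate (p + 1) (0 : Fin (n + 2))) hW1ne hjZ
  have htailrep : (List.replicate (p + 1) (0 : Fin (n + 2))).tail
      = List.replicate p (0 : Fin (n + 2)) := by
    rw [List.replicate_succ]; rfl
  rw [htailrep] at hspZ hwspZ
  set Z := W1 ++ List.replicate p (0 : Fin (n + 2)) with hZ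
  have hZtw : tw A 0 Z = ((w i : ℝ) : EReal) := by
    rw [hZ, hspZ, Nat.zero_add, hreptw, add_zero, ← hatt1]
  have hZwalk : twalk A 0 Z := by
    rw [hZ]
    apply hwspZ.mpr
    rw [Nat.zero_add]
    exact ⟨hW1.1, hrepwalk⟩
  have hZne : Z ≠ [] := by rw [hZ]; simp [hW1ne]
  have hZlen : Z.length = s2 + 1 := by
    rw [hZ, List.length_append, List.length_replicate]
    omega
  have hZlast : Z.getLast? = some 0 := by
    rw [hZ]
    cases hpc : p with
    | zero => simpa using hW1last
    | succ q =>
      rw [List.replicate_succ', ← List.append_assoc, List.getLast?_concat]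
  have hW2head : W2.head? = some 0 := hW2.2.2.1
  have hjF : Z.getLast? = W2.head? := by rw [hZlast, hW2head]
  have hspF := tw_splice A Z 0 W2 hZne hjF
  have hwspF := twalk_splice A Z 0 W2 hZne hjF
  have hlvlF : 0 + (Z.length - 1) = s2 := by omega
  rw [hlvlF] at hspF hwspF
  refine ⟨Z ++ W2.tail, ⟨hwspF.mpr ⟨hZwalk, hW2.1⟩, ?_, ?_, ?_⟩, ?_⟩
  · rw [List.length_append, List.length_tail]
    omega
  · rw [head?_append_left _ hZne, hZ, head?_append_left _ hW1ne]
    exact hW1.2.2.1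
  · have hW2last : W2.getLast? = some j := hW2.2.2.2.1
    cases W2 with
    | nil => simp at hW2head
    | cons c rest =>
      cases rest with
      | nil =>
        have hc : c = (0 : Fin (n + 2)) := by simpa using hW2head
        have hj : c = j := by simpa using hW2last
        simp only [List.tail_cons, List.append_nil]
        rw [hZlast, ← hj, hc]
      | cons d t3 =>
        simp only [List.tail_cons]
        rw [getLast?_append_cons]
        rw [List.getLast?_cons_cons] at hW2last
        exact hW2last
  · rw [hspF, hZtw, ← hatt2]

end Main

/-- the main theorem, matrix (rank-one) form (with the implicit bound). -/
theorem rank_one_transient_statement5 {n : ℕ}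
    (𝒳 : Set (Fin (n + 2) → Fin (n + 2) → EReal))
    (Asup Ainf : Fin (n + 2) → Fin (n + 2) → EReal)
    (hstand : Standing 𝒳 Asup Ainf 0)
    (k : ℕ) (hk : 1 ≤ k)
    (A : ℕ → Fin (n + 2) → Fin (n + 2) → EReal)
    (hA : ∀ l, 1 ≤ l → l ≤ k → A l ∈ 𝒳)
    (hcyc : ∃ W, isCycle Asup W ∧ ∀ v ∈ W, v ≠ (0 : Fin (n + 2)))
    (a b w v : Fin (n + 2) → ℝ)
    (ha : ∀ i, ((a i : ℝ) : EReal) = alphaE Asup 0 i)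
    (hb : ∀ j, ((b j : ℝ) : EReal) = betaE Asup 0 j)
    (hw : ∀ i, ((w i : ℝ) : EReal) = wStar A 0 k i)
    (hv : ∀ j, ((v j : ℝ) : EReal) = vStar A 0 k j)
    -- `k` exceeds the bound for every pair `(i, j)`; the term involving `γ_{i,j}` is
    -- omitted from the maximum whenever `γ_{i,j} = -∞`
    (hk1 : ∀ i j, ∀ g : ℝ, gammaE Asup 0 i j = (g : EReal) →
      (k : ℝ) > (w i + v j - g) / lamStar Asup 0 + ((n + 2 : ℝ) - 1))
    (hk2 : ∀ i j, (k : ℝ) >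
      (w i - a i + v j - b j) / lamStar Asup 0 + 2 * ((n + 2 : ℝ) - 1)) :
    ∀ i j, Gamma A k i j = Gamma A k i 0 + Gamma A k 0 j := by
  obtain ⟨hXne, hXtop, hsupdef, hinfdef, hStop, hbotinf, hirr, hirrinf, hgeom, hX00,
    hXneg, hS00, hSneg⟩ := hstand
  have hXle : ∀ l, 1 ≤ l → l ≤ k → ∀ a' b', A l a' b' ≤ Asup a' b' := by
    intro l h1 h2 a' b'
    rw [hsupdef a' b']
    exact le_biSup (fun X => X a' b') (hA l h1 h2)
  have hlam : lamStar Asup 0 < 0 := lamStar_neg hSneg hcyc hStop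
  have hA00 : ∀ l, 1 ≤ l → l ≤ k → A l 0 0 = 0 := fun l h1 h2 => hX00 _ (hA l h1 h2)
  -- w 0 = 0
  have hw0 : w 0 = 0 := by
    have hset : {x : EReal | ∃ W, isInitialWalk A 0 k 0 W ∧ x = tw A 0 W}
        = {(0 : EReal)} := by
      ext x
      constructor
      · rintro ⟨W, ⟨hwk, hlen, hhead, hlast, hav⟩, rfl⟩
        cases W with
        | nil => simp at hhead
        | cons c rest =>
          have hc : c = 0 := by simpa using hhead
          cases rest with
          | nil => simp [tw_single]
          | cons d t =>
            exfalso
            have hmem : c ∈ (c :: d :: t).dropLast := by simp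
            exact hav c hmem hc
      · rintro rfl
        exact ⟨[0], ⟨trivial, by simp, rfl, rfl, by simp⟩, rfl⟩
    have h1 := hw 0
    have h2 : wStar A 0 k 0 = sSup {x : EReal | ∃ W, isInitialWalk A 0 k 0 W ∧
        x = tw A 0 W} := rfl
    rw [h2, hset, csSup_singleton] at h1
    exact_mod_cast h1
  -- v 0 = 0
  have hv0 : v 0 = 0 := by
    have hset : {x : EReal | ∃ s W, isFinalWalk A 0 k 0 s W ∧ x = tw A s W}
        = {(0 : EReal)} := by
      ext x
      constructor
      · rintro ⟨s, W, ⟨hwk, hslen, hhead, hlast, hav⟩, rfl⟩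
        cases W with
        | nil => simp at hhead
        | cons c rest =>
          have hc : c = 0 := by simpa using hhead
          cases rest with
          | nil => simp [tw_single]
          | cons d t =>
            exfalso
            rw [List.getLast?_cons_cons] at hlast
            have hmem : (0 : Fin (n + 2)) ∈ d :: t :=
              List.mem_of_mem_getLast? (by rw [hlast]; rfl)
            exact hav 0 (by simpa using hmem) rfl
      · rintro rfl
        exact ⟨k, [0], ⟨trivial, by simp, rfl, rfl, by simp⟩, rfl⟩
    have h1 := hv 0
    have h2 : vStar A 0 k 0 = sSup {x : EReal | ∃ s W, isFinalWalk A 0 k 0 s W ∧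
        x = tw A s W} := rfl
    rw [h2, hset, csSup_singleton] at h1
    exact_mod_cast h1
  have MAIN : ∀ i j, Gamma A k i j = ((w i : ℝ) : EReal) + ((v j : ℝ) : EReal) := by
    intro i j
    rw [gamma_eq]
    apply le_antisymm
    · exact sSup_le (fun x hx => main_le hXle hStop hSneg hlam hk hw hv hS00 hk1 i j x hx)
    · exact le_sSup (main_ge hXle hStop hSneg hlam hk hA00 ha hb hw hv hk2 i j)
  intro i j
  rw [MAIN i j, MAIN i 0, MAIN 0 j, hw0, hv0]
  rw [EReal.coe_zero, add_zero, zero_add]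

end MaxPlusTransient
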